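/- The formal power series F(x) = Σ_{n≥1} A_n(s,t) x^n and I⁺(x) = Σ_{n≥1} B⁺_n(s,t) x^n, with coefficients in ℚ(s,t) (or ℚ[s,t]), satisfy F = I⁺·(1 + F); equivalently, I⁺ = F/(1+F). In coefficient form: for every n ≥ 1, A_n(s,t) = B⁺_n(s,t) + Σ_{k=1}^{n−1} B⁺_k(s,t) A_{n−k}(s,t). -/

import Mathlib

/-- The number of descents of a permutation of `Fin n`. -/
def des {n : ℕ} (π : Equiv.Perm (Fin n)) : ℕ :=
  (Finset.univ.filter (fun p : Fin n × Fin n =>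
    (p.2 : ℕ) = (p.1 : ℕ) + 1 ∧ π p.2 < π p.1)).card

/-- The number of descents of the inverse permutation. -/
def ides {n : ℕ} (π : Equiv.Perm (Fin n)) : ℕ := des π⁻¹

/-- `σ` can be written as a direct sum `π ⊕ τ` of two (nonempty) permutations:
there is `0 < m < n` such that the first `m` positions carry the values `0,…,m-1`. -/
def SumDecomposable {n : ℕ} (σ : Equiv.Perm (Fin n)) : Prop :=
  ∃ m : ℕ, 0 < m ∧ m < n ∧ ∀ i : Fin n, (i : ℕ) < m → (σ i : ℕ) < m

open MvPolynomial

/-- The two-sided Eulerian polynomial `A_n(s,t)` (`s = X 0`, `t = X 1`). -/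
noncomputable def twoSidedEulerian (n : ℕ) : MvPolynomial (Fin 2) ℤ :=
  ∑ π : Equiv.Perm (Fin n), (X 0) ^ des π * (X 1) ^ ides π

open scoped Classical in
/-- The two-sided descent polynomial `B⁺_n(s,t)` of the sum-indecomposable
permutations of length `n`. -/
noncomputable def sumIndecPoly (n : ℕ) : MvPolynomial (Fin 2) ℤ :=
  ∑ π ∈ Finset.univ.filter (fun π : Equiv.Perm (Fin n) => ¬ SumDecomposable π),
    (X 0) ^ des π * (X 1) ^ ides π

/-!
Every `σ ∈ S_n` with `n ≥ 1` is uniquely a direct sum `π ⊕ τ` with `π` sum-indecomposable: the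
length `k` of `π` is the least positive `j` such that `σ` maps `{0, …, j-1}` onto itself. Since
`des` and `ides` are additive under `⊕`, grouping `S_n` by `k` gives
`A_n = Σ_{k=1}^{n} B⁺_k A_{n-k}`, and the term `k = n` is `B⁺_n` because `A_0 = 1`.
-/

namespace Equiv.Perm

variable {k m n : ℕ}

def directSumHom (k m : ℕ) : Perm (Fin k) × Perm (Fin m) →* Perm (Fin (k + m)) :=
  finSumFinEquiv.permCongrHom.toMonoidHom.comp (sumCongrHom (Fin k) (Fin m))

def directSum (π : Perm (Fin k)) (τ : Perm (Fin m)) : Perm (Fin (k + m)) :=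
  directSumHom k m (π, τ)

infixl:65 " ⊕ₚ " => directSum

@[simp]
lemma directSum_apply_castAdd (π : Perm (Fin k)) (τ : Perm (Fin m)) (i : Fin k) :
    (π ⊕ₚ τ) (Fin.castAdd m i) = Fin.castAdd m (π i) := by
  simp [directSum, directSumHom, Equiv.permCongrHom_coe, Equiv.permCongr_apply]

@[simp]
lemma directSum_apply_natAdd (π : Perm (Fin k)) (τ : Perm (Fin m)) (j : Fin m) :
    (π ⊕ₚ τ) (Fin.natAdd k j) = Fin.natAdd k (τ j) := by
  simp [directSum, directSumHom, Equiv.permCongrHom_coe, Equiv.permCongr_apply]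

lemma directSum_inv (π : Perm (Fin k)) (τ : Perm (Fin m)) : (π ⊕ₚ τ)⁻¹ = π⁻¹ ⊕ₚ τ⁻¹ :=
  (map_inv (directSumHom k m) (π, τ)).symm

lemma directSumHom_injective : Function.Injective (directSumHom k m) :=
  finSumFinEquiv.permCongrHom.injective.comp sumCongrHom_injective

lemma des_directSum (π : Perm (Fin k)) (τ : Perm (Fin m)) :
    des (π ⊕ₚ τ) = des π + des τ := by
  simp only [des, Finset.card_filter]
  rw [← Fintype.sum_equiv (finSumFinEquiv.prodCongr finSumFinEquiv) _ _ (fun _ => rfl)]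
  simp only [Fintype.sum_prod_type, Fintype.sum_sum_type, Equiv.prodCongr_apply, Prod.map,
    finSumFinEquiv_apply_left, finSumFinEquiv_apply_right, directSum_apply_castAdd,
    directSum_apply_natAdd, Fin.val_castAdd, Fin.val_natAdd, Fin.lt_def]
  -- No descent straddles the two blocks, since all values of the first block are smaller.
  have straddle (i : Fin k) (j : Fin m) : ¬ (k + (j : ℕ) = i + 1 ∧ k + (τ j : ℕ) < π i) := by
    have := (π i).isLt; omega
  have backwards (i : Fin k) (j : Fin m) : (i : ℕ) ≠ k + (j + 1) := by
    have := i.isLt; omega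
  simp only [add_assoc, straddle, backwards, false_and, if_false, Finset.sum_const_zero,
    add_zero, zero_add, Nat.add_left_cancel_iff, Nat.add_lt_add_iff_left]

lemma ides_directSum (π : Perm (Fin k)) (τ : Perm (Fin m)) :
    ides (π ⊕ₚ τ) = ides π + ides τ := by
  rw [ides, directSum_inv, des_directSum, ides, ides]

def IsSplitAt (j : ℕ) (σ : Perm (Fin n)) : Prop :=
  ∀ i : Fin n, (i : ℕ) < j → (σ i : ℕ) < j

lemma isSplitAt_self (σ : Perm (Fin n)) : IsSplitAt n σ := fun i _ => (σ i).isLt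

lemma isSplitAt_directSum_iff {j : ℕ} (π : Perm (Fin k)) (τ : Perm (Fin m)) (hj : j ≤ k) :
    IsSplitAt j (π ⊕ₚ τ) ↔ IsSplitAt j π := by
  refine ⟨fun h i hi => ?_, fun h i hi => ?_⟩
  · simpa using h (Fin.castAdd m i) hi
  · obtain ⟨i, rfl⟩ : ∃ i' : Fin k, Fin.castAdd m i' = i := ⟨⟨i, by omega⟩, rfl⟩
    simpa using h i hi

lemma exists_directSum_eq {σ : Perm (Fin (k + m))} (h : IsSplitAt k σ) :
    ∃ π τ, π ⊕ₚ τ = σ := by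
  have hmaps : Set.MapsTo (finSumFinEquiv.symm.permCongr σ) (Set.range Sum.inl)
      (Set.range Sum.inl) := by
    rintro _ ⟨i, rfl⟩
    obtain ⟨j, hj⟩ : ∃ j : Fin k, Fin.castAdd m j = σ (Fin.castAdd m i) :=
      ⟨⟨_, h _ i.isLt⟩, rfl⟩
    exact ⟨j, by simp [Equiv.permCongr_apply, ← hj]⟩
  obtain ⟨⟨π, τ⟩, hπτ⟩ := mem_sumCongrHom_range_of_perm_mapsTo_inl hmaps
  refine ⟨π, τ, ?_⟩
  simp only [directSum, directSumHom, MonoidHom.comp_apply, hπτ]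
  exact finSumFinEquiv.permCongr.apply_symm_apply σ

noncomputable def firstComponentLength (σ : Perm (Fin n)) : ℕ :=
  sInf {j | 0 < j ∧ IsSplitAt j σ}

lemma firstComponentLength_le {σ : Perm (Fin n)} {j : ℕ} (hj : 0 < j) (h : IsSplitAt j σ) :
    firstComponentLength σ ≤ j :=
  Nat.sInf_le ⟨hj, h⟩

lemma firstComponentLength_spec (hn : 0 < n) (σ : Perm (Fin n)) :
    0 < firstComponentLength σ ∧ IsSplitAt (firstComponentLength σ) σ :=
  Nat.sInf_mem (s := {j | 0 < j ∧ IsSplitAt j σ}) ⟨n, hn, isSplitAt_self σ⟩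

lemma firstComponentLength_mem_Icc (hn : 0 < n) (σ : Perm (Fin n)) :
    firstComponentLength σ ∈ Finset.Icc 1 n :=
  Finset.mem_Icc.mpr
    ⟨(firstComponentLength_spec hn σ).1, firstComponentLength_le hn (isSplitAt_self σ)⟩

lemma firstComponentLength_directSum_eq_iff (π : Perm (Fin k)) (τ : Perm (Fin m)) (hk : 0 < k) :
    firstComponentLength (π ⊕ₚ τ) = k ↔ ¬ SumDecomposable π := by
  have hle : firstComponentLength (π ⊕ₚ τ) ≤ k :=
    firstComponentLength_le hk ((isSplitAt_directSum_iff π τ le_rfl).mpr (isSplitAt_self π))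
  constructor
  · rintro h ⟨j, hj, hjk, hsplit⟩
    have := firstComponentLength_le hj ((isSplitAt_directSum_iff π τ hjk.le).mpr hsplit)
    omega
  · intro h
    obtain ⟨hpos, hsplit⟩ := firstComponentLength_spec (by omega) (π ⊕ₚ τ)
    by_contra hne
    exact h ⟨_, hpos, lt_of_le_of_ne hle hne, (isSplitAt_directSum_iff π τ hle).mp hsplit⟩

end Equiv.Perm

open Equiv Perm

noncomputable def desIdesMonomial {n : ℕ} (σ : Perm (Fin n)) : MvPolynomial (Fin 2) ℤ :=
  X 0 ^ des σ * X 1 ^ ides σ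

lemma desIdesMonomial_directSum {k m : ℕ} (π : Perm (Fin k)) (τ : Perm (Fin m)) :
    desIdesMonomial (π ⊕ₚ τ) = desIdesMonomial π * desIdesMonomial τ := by
  simp only [desIdesMonomial, des_directSum, ides_directSum]
  ring

lemma twoSidedEulerian_zero : twoSidedEulerian 0 = 1 := by
  simp [twoSidedEulerian, des, ides]

open scoped Classical in
lemma sum_filter_firstComponentLength_eq {k m : ℕ} (hk : 0 < k) :
    ∑ σ ∈ Finset.univ.filter (fun σ : Perm (Fin (k + m)) => firstComponentLength σ = k),
      desIdesMonomial σ = sumIndecPoly k * twoSidedEulerian m := by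
  rw [sumIndecPoly, twoSidedEulerian, Finset.sum_mul_sum, ← Finset.sum_product']
  symm
  refine Finset.sum_bij (fun p _ => p.1 ⊕ₚ p.2) ?_ ?_ ?_ ?_
  · rintro ⟨π, τ⟩ h
    simpa [firstComponentLength_directSum_eq_iff π τ hk] using h
  · rintro ⟨π, τ⟩ _ ⟨π', τ'⟩ _ h
    exact directSumHom_injective h
  · intro σ hσ
    rw [Finset.mem_filter] at hσ
    obtain ⟨π, τ, rfl⟩ := exists_directSum_eq (hσ.2 ▸ (firstComponentLength_spec (by omega) σ).2)
    exact ⟨(π, τ), by simpa [firstComponentLength_directSum_eq_iff π τ hk] using hσ.2, rfl⟩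
  · rintro ⟨π, τ⟩ _
    exact (desIdesMonomial_directSum π τ).symm

/-- Coefficient form of `F = I⁺ · (1 + F)`: for every `n ≥ 1`,
`A_n = B⁺_n + Σ_{k=1}^{n-1} B⁺_k A_{n-k}`. -/
theorem stmt14 (n : ℕ) (hn : 1 ≤ n) :
    twoSidedEulerian n =
      sumIndecPoly n + ∑ k ∈ Finset.Ico 1 n, sumIndecPoly k * twoSidedEulerian (n - k) := by
  have hsplit : twoSidedEulerian n =
      ∑ k ∈ Finset.Icc 1 n, sumIndecPoly k * twoSidedEulerian (n - k) := by
    rw [twoSidedEulerian, ← Finset.sum_fiberwise_of_maps_to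
      (fun σ _ => firstComponentLength_mem_Icc hn σ)]
    refine Finset.sum_congr rfl fun k hk => ?_
    obtain ⟨hk1, hkn⟩ := Finset.mem_Icc.mp hk
    obtain ⟨m, rfl⟩ := Nat.exists_eq_add_of_le hkn
    rw [Nat.add_sub_cancel_left]
    exact sum_filter_firstComponentLength_eq hk1
  rw [hsplit, ← Finset.Ico_add_one_right_eq_Icc, Finset.sum_Ico_succ_top hn, Nat.sub_self,
    twoSidedEulerian_zero, mul_one, add_comm]
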